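/- arXiv:2004.06533 — 4 statements merged into one kernel-verified Lean document; each statement's English description precedes it below -/
import Mathlib

section
/- Let (Ω, F, μ) be a probability space, p ∈ [0,1], and let Y, Z : Ω → ℝ be independent, identically distributed random variables with mean 0 and variance σ² (i.e. E[Y] = E[Z] = 0 and E[Y²] = E[Z²] = σ² < ∞). Let W : Ω → ℝ be a {0,1}-valued random variable with P(W = 1) = p that is independent of the pair (Y, Z), and define X := W·Z + (1 − W)·Y. Then for every Borel measurable function h : ℝ → ℝ such that h ∘ Z is square-integrable, E[(X − p·Z)²] ≤ E[(X − h(Z))²]; i.e. the estimator Ẑ = p·Z minimizes the mean squared error of estimating X among all square-integrable functions of Z. -/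
open MeasureTheory ProbabilityTheory

/-!
Write `X = W Z + (1 - W) Y`. Any square-integrable estimator `h(Z)` differs from `p Z` by
`G = p Z - h(Z)`, a square-integrable function of `Z`, so
`E[(X - h(Z))²] = E[(X - p Z)²] + 2 E[(X - p Z) G] + E[G²]` and it suffices that the residual
`X - p Z = (W - p) Z + (1 - W) Y` is orthogonal to every such `G`. Since `W` is independent
of `(Y, Z)`, the first summand contributes `E[W - p] E[Z G] = 0` and the second
`E[1 - W] E[Y] E[G] = 0`, using that `Y` is independent of `Z` with `E[Y] = 0`.
-/

section Orthogonality

variable {Ω : Type*} {m : MeasurableSpace Ω} {μ : Measure Ω}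

lemma integral_sq_le_integral_add_sq_of_integral_mul_eq_zero {f g : Ω → ℝ}
    (hf : MemLp f 2 μ) (hg : MemLp g 2 μ) (hfg : ∫ ω, f ω * g ω ∂μ = 0) :
    ∫ ω, f ω ^ 2 ∂μ ≤ ∫ ω, (f ω + g ω) ^ 2 ∂μ := by
  have hf2 : Integrable (fun ω => f ω ^ 2) μ := hf.integrable_sq
  have hcross : Integrable (fun ω => 2 * (f ω * g ω)) μ := (hf.integrable_mul hg).const_mul 2
  have hexpand : ∫ ω, (f ω + g ω) ^ 2 ∂μ
      = ∫ ω, f ω ^ 2 ∂μ + 2 * ∫ ω, f ω * g ω ∂μ + ∫ ω, g ω ^ 2 ∂μ := by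
    have hpt : ∀ ω, (f ω + g ω) ^ 2 = f ω ^ 2 + 2 * (f ω * g ω) + g ω ^ 2 := fun ω => by ring
    have hsum : Integrable (fun ω => f ω ^ 2 + 2 * (f ω * g ω)) μ := hf2.add hcross
    simp_rw [hpt]
    rw [integral_add hsum hg.integrable_sq, integral_add hf2 hcross,
      integral_const_mul]
  have hg2_nonneg : 0 ≤ ∫ ω, g ω ^ 2 ∂μ := integral_nonneg fun ω => sq_nonneg (g ω)
  rw [hexpand, hfg]
  linarith

end Orthogonality

section Mixture

variable {Ω : Type*} {m : MeasurableSpace Ω} {μ : Measure Ω} {W Y Z : Ω → ℝ}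

lemma integral_eq_measureReal_of_forall_eq_zero_or_one (hWm : Measurable W)
    (hW01 : ∀ ω, W ω = 0 ∨ W ω = 1) :
    ∫ ω, W ω ∂μ = μ.real {ω | W ω = 1} := by
  have hW : W = Set.indicator {ω | W ω = 1} 1 := by
    funext ω
    rcases hW01 ω with h0 | h1 <;> simp [*]
  have hmeas : MeasurableSet {ω | W ω = 1} := hWm (measurableSet_singleton 1)
  rw [← integral_indicator_one hmeas, ← hW]

lemma integral_mixture_sub_mul_eq_zero [IsProbabilityMeasure μ] {p : ℝ} {g : ℝ → ℝ}
    (hW : Integrable W μ) (hEW : ∫ ω, W ω ∂μ = p)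
    (hW_ind : IndepFun W (fun ω => (Y ω, Z ω)) μ)
    (hY2 : MemLp Y 2 μ) (hYmean : ∫ ω, Y ω ∂μ = 0) (hZ2 : MemLp Z 2 μ)
    (hYZ_ind : IndepFun Y Z μ) (hg : Measurable g) (hgZ : MemLp (fun ω => g (Z ω)) 2 μ) :
    ∫ ω, (W ω * Z ω + (1 - W ω) * Y ω - p * Z ω) * g (Z ω) ∂μ = 0 := by
  set V₁ : Ω → ℝ := fun ω => Z ω * g (Z ω)
  set V₂ : Ω → ℝ := fun ω => Y ω * g (Z ω)
  have hV₁ : Integrable V₁ μ := hZ2.integrable_mul hgZ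
  have hV₂ : Integrable V₂ μ := hY2.integrable_mul hgZ
  have hWp : Integrable (fun ω => W ω - p) μ := hW.sub (integrable_const p)
  have hWc : Integrable (fun ω => 1 - W ω) μ := (integrable_const 1).sub hW
  have hind₁ : IndepFun (fun ω => W ω - p) V₁ μ :=
    hW_ind.comp (measurable_id.sub_const p) (measurable_snd.mul (hg.comp measurable_snd))
  have hind₂ : IndepFun (fun ω => 1 - W ω) V₂ μ :=
    hW_ind.comp (measurable_const.sub measurable_id) (measurable_fst.mul (hg.comp measurable_snd))
  have hE₁ : ∫ ω, (W ω - p) * V₁ ω ∂μ = 0 := by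
    rw [hind₁.integral_fun_mul_eq_mul_integral hWp.aestronglyMeasurable hV₁.aestronglyMeasurable,
      integral_sub hW (integrable_const p), hEW]
    simp
  have hEV₂ : ∫ ω, V₂ ω ∂μ = 0 := by
    have hind : IndepFun Y (fun ω => g (Z ω)) μ := hYZ_ind.comp measurable_id hg
    rw [hind.integral_fun_mul_eq_mul_integral hY2.aestronglyMeasurable hgZ.aestronglyMeasurable,
      hYmean, zero_mul]
  have hE₂ : ∫ ω, (1 - W ω) * V₂ ω ∂μ = 0 := by
    rw [hind₂.integral_fun_mul_eq_mul_integral hWc.aestronglyMeasurable hV₂.aestronglyMeasurable,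
      hEV₂, mul_zero]
  have hI₁ : Integrable (fun ω => (W ω - p) * V₁ ω) μ := hind₁.integrable_mul hWp hV₁
  have hI₂ : Integrable (fun ω => (1 - W ω) * V₂ ω) μ := hind₂.integrable_mul hWc hV₂
  calc ∫ ω, (W ω * Z ω + (1 - W ω) * Y ω - p * Z ω) * g (Z ω) ∂μ
      = ∫ ω, ((W ω - p) * V₁ ω + (1 - W ω) * V₂ ω) ∂μ := by
        congr 1; funext ω; simp only [V₁, V₂]; ring
    _ = 0 := by
        rw [integral_add hI₁ hI₂, hE₁, hE₂, add_zero]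

end Mixture

theorem optimal_estimator_pZ_general
    {Ω : Type*} {F : MeasurableSpace Ω} (μ : Measure Ω) [IsProbabilityMeasure μ]
    (p : ℝ) (hp0 : 0 ≤ p)
    (Y Z W : Ω → ℝ)
    (hWm : Measurable W)
    (hYZ_id : IdentDistrib Y Z μ μ)
    (hYZ_ind : IndepFun Y Z μ)
    (hY2 : MemLp Y 2 μ)
    (hYmean : ∫ ω, Y ω ∂μ = 0)
    (hW01 : ∀ ω, W ω = 0 ∨ W ω = 1)
    (hWp : μ {ω | W ω = 1} = ENNReal.ofReal p)
    (hW_ind : IndepFun W (fun ω => (Y ω, Z ω)) μ)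
    (h : ℝ → ℝ) (hh : Measurable h) (hhZ : MemLp (fun ω => h (Z ω)) 2 μ) :
    ∫ ω, ((W ω * Z ω + (1 - W ω) * Y ω) - p * Z ω) ^ 2 ∂μ
      ≤ ∫ ω, ((W ω * Z ω + (1 - W ω) * Y ω) - h (Z ω)) ^ 2 ∂μ := by
  have hZ2 : MemLp Z 2 μ := hYZ_id.memLp_snd hY2
  have hW_bdd : MemLp W ⊤ μ := memLp_top_of_bound hWm.aestronglyMeasurable 1 <|
    ae_of_all _ fun ω => by rcases hW01 ω with h0 | h1 <;> simp [*]
  have hEW : ∫ ω, W ω ∂μ = p := by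
    rw [integral_eq_measureReal_of_forall_eq_zero_or_one hWm hW01, measureReal_def, hWp,
      ENNReal.toReal_ofReal hp0]
  have hres : MemLp (fun ω => W ω * Z ω + (1 - W ω) * Y ω - p * Z ω) 2 μ :=
    ((hZ2.smul hW_bdd).add (hY2.smul ((memLp_const 1).sub hW_bdd))).sub (hZ2.const_mul p)
  have hG : MemLp (fun ω => p * Z ω - h (Z ω)) 2 μ := (hZ2.const_mul p).sub hhZ
  have horth := integral_mixture_sub_mul_eq_zero (hW_bdd.integrable le_top) hEW hW_ind hY2
    hYmean hZ2 hYZ_ind ((measurable_id.const_mul p).sub hh) hG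
  simpa only [sub_add_sub_cancel] using
    integral_sq_le_integral_add_sq_of_integral_mul_eq_zero hres hG horth

/-- Optimality part of Lemma 5: if `X = Z` with probability `p` and `X = Y` (an independent
i.i.d. copy of `Z`) with probability `1 - p`, where the Bernoulli variable `W` is independent of
the pair `(Y, Z)`, then the estimator `p • Z` minimizes the mean squared error of estimating `X`
among all square-integrable Borel functions of `Z`. -/
theorem optimal_estimator_pZ
    {Ω : Type*} {F : MeasurableSpace Ω} (μ : Measure Ω) [IsProbabilityMeasure μ]
    (p σ2 : ℝ) (hp0 : 0 ≤ p) (hp1 : p ≤ 1)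
    (Y Z W : Ω → ℝ)
    (hYm : Measurable Y) (hZm : Measurable Z) (hWm : Measurable W)
    (hYZ_id : IdentDistrib Y Z μ μ)
    (hYZ_ind : IndepFun Y Z μ)
    (hY2 : MemLp Y 2 μ)
    (hYmean : ∫ ω, Y ω ∂μ = 0)
    (hYvar : ∫ ω, (Y ω) ^ 2 ∂μ = σ2)
    (hW01 : ∀ ω, W ω = 0 ∨ W ω = 1)
    (hWp : μ {ω | W ω = 1} = ENNReal.ofReal p)
    (hW_ind : IndepFun W (fun ω => (Y ω, Z ω)) μ)
    (h : ℝ → ℝ) (hh : Measurable h) (hhZ : MemLp (fun ω => h (Z ω)) 2 μ) :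
    ∫ ω, ((W ω * Z ω + (1 - W ω) * Y ω) - p * Z ω) ^ 2 ∂μ
      ≤ ∫ ω, ((W ω * Z ω + (1 - W ω) * Y ω) - h (Z ω)) ^ 2 ∂μ :=
  optimal_estimator_pZ_general (F := F) μ p hp0 Y Z W hWm hYZ_id hYZ_ind hY2 hYmean hW01 hWp hW_ind
    h hh hhZ
end

section
/- Let N ≥ 2 be an integer and λ_r > 0, λ_c > 0 reals, and set ρ̃ := λ_c/((N−1)·λ_r). Let C be the N×N real matrix with entries C_{k,k} = −k(N−k) and C_{k+1,k} = k(N−k) for 1 ≤ k ≤ N−1 and zeros elsewhere; let R be the N×N real matrix with entries R_{k,k} = −(k−1) and R_{k−1,k} = k−1 for 2 ≤ k ≤ N and zeros elsewhere; let A := λ_r·(ρ̃·C + R); let w ∈ ℝ^N have entries w_k = (k−1)/(N−1), let v ∈ ℝ^N have entries v_k = k(N−k)/(N−1), and let e₁ ∈ ℝ^N be the first standard basis vector. If the matrices 2λ_r·I − A and ρ̃⁻¹·(2I − R) − C are both invertible, then 1 − wᵀ·A·(2λ_r·I − A)⁻¹·e₁ = 1 − (vᵀ − ρ̃⁻¹·wᵀ)·(ρ̃⁻¹·(2I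 − R) − C)⁻¹·e₁. -/
/-! With `M = ρ̃⁻¹ (2I - R) - C` one has `2 λ_r I - A = λ_r ρ̃ M`, and the identities
`wᵀ C = vᵀ`, `wᵀ R = -wᵀ` give `wᵀ A = λ_r ρ̃ (vᵀ - ρ̃⁻¹ wᵀ)`; the two factors `λ_r ρ̃` cancel. -/

open Matrix

/-- Interaction part `C` of the decomposition `A = λ_r (ρ̃ C + R)` (1-indexed `k = i + 1`). -/
noncomputable def matC (N : ℕ) : Matrix (Fin N) (Fin N) ℝ :=
  Matrix.of fun i j =>
    if i = j then -(((i : ℕ) + 1 : ℝ) * ((N : ℝ) - ((i : ℕ) + 1 : ℝ)))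
    else if (i : ℕ) = (j : ℕ) + 1 then ((j : ℕ) + 1 : ℝ) * ((N : ℝ) - ((j : ℕ) + 1 : ℝ))
    else 0

/-- Replacement part `R` of the decomposition `A = λ_r (ρ̃ C + R)` (1-indexed `k = i + 1`). -/
noncomputable def matR (N : ℕ) : Matrix (Fin N) (Fin N) ℝ :=
  Matrix.of fun i j =>
    if i = j then -((i : ℕ) : ℝ)
    else if (j : ℕ) = (i : ℕ) + 1 then ((j : ℕ) : ℝ)
    else 0

section
variable {K n : Type*} [Field K]

lemma two_smul_one_sub_smul_eq [DecidableEq n] (r ρ : K) (hρ : ρ ≠ 0) (C R : Matrix n n K) :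
    (2 * r) • (1 : Matrix n n K) - r • (ρ • C + R) = (r * ρ) • (ρ⁻¹ • ((2 : K) • 1 - R) - C) := by
  match_scalars <;> field_simp

variable [Fintype n]

lemma vecMul_smul_add_eq {C R : Matrix n n K} {w v : n → K} (hC : w ᵥ* C = v) (hR : w ᵥ* R = -w)
    (r ρ : K) (hρ : ρ ≠ 0) : w ᵥ* (r • (ρ • C + R)) = (r * ρ) • (v - ρ⁻¹ • w) := by
  rw [vecMul_smul, vecMul_add, vecMul_smul, hC, hR, smul_sub, smul_smul, mul_assoc,
    mul_inv_cancel₀ hρ, mul_one, smul_add, sub_eq_add_neg, smul_smul, smul_neg]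

lemma dotProduct_mulVec_inv_two_smul_one_sub [DecidableEq n] {C R : Matrix n n K} {w v : n → K}
    (hC : w ᵥ* C = v) (hR : w ᵥ* R = -w) {r ρ : K} (hr : r ≠ 0) (hρ : ρ ≠ 0)
    (hM : IsUnit (ρ⁻¹ • ((2 : K) • (1 : Matrix n n K) - R) - C)) (e : n → K) :
    w ⬝ᵥ ((r • (ρ • C + R)) *ᵥ (((2 * r) • (1 : Matrix n n K) - r • (ρ • C + R))⁻¹ *ᵥ e))
      = (v - ρ⁻¹ • w) ⬝ᵥ ((ρ⁻¹ • ((2 : K) • (1 : Matrix n n K) - R) - C)⁻¹ *ᵥ e) := by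
  have hrρ : r * ρ ≠ 0 := mul_ne_zero hr hρ
  have := invertibleOfNonzero hrρ
  rw [two_smul_one_sub_smul_eq r ρ hρ, inv_smul _ _ ((isUnit_iff_isUnit_det _).mp hM),
    invOf_eq_inv, dotProduct_mulVec w, vecMul_smul_add_eq hC hR r ρ hρ, smul_mulVec,
    dotProduct_smul, smul_dotProduct, smul_smul, inv_mul_cancel₀ hrρ, one_smul]

end

lemma vecMul_matC (N : ℕ) :
    (fun k : Fin N => ((k : ℕ) : ℝ)) ᵥ* matC N
      = fun k : Fin N => ((k : ℕ) + 1 : ℝ) * ((N : ℝ) - ((k : ℕ) + 1 : ℝ)) := by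
  funext j
  set c : ℝ := ((j : ℕ) + 1 : ℝ) * ((N : ℝ) - ((j : ℕ) + 1 : ℝ))
  have hsplit : ∀ i : Fin N, ((i : ℕ) : ℝ) * matC N i j =
      (if i = j then -((j : ℕ) * c) else 0) +
      (if (i : ℕ) = (j : ℕ) + 1 then ((i : ℕ) : ℝ) * c else 0) := by
    intro i
    rcases eq_or_ne i j with rfl | h
    · simp [matC, c]
    · by_cases h2 : (i : ℕ) = (j : ℕ) + 1 <;> simp [matC, c, h, h2]
  simp only [vecMul, dotProduct, hsplit, Finset.sum_add_distrib, Finset.sum_ite_eq',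
    Finset.mem_univ, if_true]
  rw [Fin.sum_univ_eq_sum_range (fun i => if i = (j : ℕ) + 1 then (i : ℝ) * c else 0),
    Finset.sum_ite_eq']
  rcases (Nat.succ_le_of_lt j.isLt).lt_or_eq with hj | hj
  · simp [hj]
    ring
  · -- the last column of `C` vanishes: `c = N (N - N) = 0`
    have hc : c = 0 := by
      simp only [c, mul_eq_zero, sub_eq_zero]
      exact Or.inr (mod_cast hj.symm)
    simp [hc]

lemma vecMul_matR (N : ℕ) :
    (fun k : Fin N => ((k : ℕ) : ℝ)) ᵥ* matR N = -fun k : Fin N => ((k : ℕ) : ℝ) := by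
  funext j
  have hsplit : ∀ i : Fin N, ((i : ℕ) : ℝ) * matR N i j =
      (if i = j then -((j : ℕ) * ((j : ℕ) : ℝ)) else 0) +
      (if (j : ℕ) = (i : ℕ) + 1 then ((i : ℕ) : ℝ) * (j : ℕ) else 0) := by
    intro i
    rcases eq_or_ne i j with rfl | h
    · simp [matR]
    · by_cases h2 : (j : ℕ) = (i : ℕ) + 1 <;> simp [matR, h, h2]
  simp only [vecMul, dotProduct, hsplit, Finset.sum_add_distrib, Finset.sum_ite_eq',
    Finset.mem_univ, if_true]
  rw [Fin.sum_univ_eq_sum_range (fun i => if (j : ℕ) = i + 1 then (i : ℝ) * (j : ℕ) else 0)]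
  obtain ⟨_ | j, hj⟩ := j
  · simp
  · simp only [add_left_inj, Finset.sum_ite_eq, Finset.mem_range]
    simp [show j < N by omega]
    ring

theorem gossip_bound_rate_ratio_reformulation_general
    (N : ℕ) (hN : 2 ≤ N) (lr lc : ℝ) (hlr : 0 < lr) (hlc : 0 < lc)
    (ρ : ℝ) (hρ : ρ = lc / (((N : ℝ) - 1) * lr))
    (A : Matrix (Fin N) (Fin N) ℝ) (hA : A = lr • (ρ • matC N + matR N))
    (w v e1 : Fin N → ℝ)
    (hw : ∀ k : Fin N, w k = ((k : ℕ) : ℝ) / ((N : ℝ) - 1))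
    (hv : ∀ k : Fin N, v k = ((k : ℕ) + 1 : ℝ) * ((N : ℝ) - ((k : ℕ) + 1 : ℝ)) / ((N : ℝ) - 1))
    (hinv2 : IsUnit (ρ⁻¹ • ((2 : ℝ) • (1 : Matrix (Fin N) (Fin N) ℝ) - matR N) - matC N)) :
    1 - w ⬝ᵥ (A *ᵥ (((2 * lr) • (1 : Matrix (Fin N) (Fin N) ℝ) - A)⁻¹ *ᵥ e1))
      = 1 - (v - ρ⁻¹ • w) ⬝ᵥ
          ((ρ⁻¹ • ((2 : ℝ) • (1 : Matrix (Fin N) (Fin N) ℝ) - matR N) - matC N)⁻¹ *ᵥ e1) := by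
  have hN1 : (N : ℝ) - 1 ≠ 0 := by
    have : (2 : ℝ) ≤ N := by exact_mod_cast hN
    linarith
  have hρ0 : ρ ≠ 0 := hρ ▸ div_ne_zero hlc.ne' (mul_ne_zero hN1 hlr.ne')
  have hw' : w = ((N : ℝ) - 1)⁻¹ • fun k : Fin N => ((k : ℕ) : ℝ) := by
    funext k
    simp [hw, div_eq_inv_mul]
  have hv' : v = ((N : ℝ) - 1)⁻¹ •
      fun k : Fin N => ((k : ℕ) + 1 : ℝ) * ((N : ℝ) - ((k : ℕ) + 1 : ℝ)) := by
    funext k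
    simp [hv, div_eq_inv_mul]
  have hC : w ᵥ* matC N = v := by rw [hw', hv', smul_vecMul, vecMul_matC]
  have hR : w ᵥ* matR N = -w := by rw [hw', smul_vecMul, vecMul_matR, smul_neg]
  rw [hA, dotProduct_mulVec_inv_two_smul_one_sub hC hR hlr.ne' hρ0 hinv2]

/-- Lemma 6 of the appendix: the asymptotic Gossip bound `1 - wᵀ A (2 λ_r I - A)⁻¹ e₁`
rewritten purely in terms of the rate ratio `ρ̃ = λ_c / ((N-1) λ_r)`. -/
theorem gossip_bound_rate_ratio_reformulation
    (N : ℕ) (hN : 2 ≤ N) (lr lc : ℝ) (hlr : 0 < lr) (hlc : 0 < lc)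
    (ρ : ℝ) (hρ : ρ = lc / (((N : ℝ) - 1) * lr))
    (A : Matrix (Fin N) (Fin N) ℝ) (hA : A = lr • (ρ • matC N + matR N))
    (w v e1 : Fin N → ℝ)
    (hw : ∀ k : Fin N, w k = ((k : ℕ) : ℝ) / ((N : ℝ) - 1))
    (hv : ∀ k : Fin N, v k = ((k : ℕ) + 1 : ℝ) * ((N : ℝ) - ((k : ℕ) + 1 : ℝ)) / ((N : ℝ) - 1))
    (he1 : ∀ j : Fin N, e1 j = if (j : ℕ) = 0 then 1 else 0)
    (hinv1 : IsUnit ((2 * lr) • (1 : Matrix (Fin N) (Fin N) ℝ) - A))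
    (hinv2 : IsUnit (ρ⁻¹ • ((2 : ℝ) • (1 : Matrix (Fin N) (Fin N) ℝ) - matR N) - matC N)) :
    1 - w ⬝ᵥ (A *ᵥ (((2 * lr) • (1 : Matrix (Fin N) (Fin N) ℝ) - A)⁻¹ *ᵥ e1))
      = 1 - (v - ρ⁻¹ • w) ⬝ᵥ
          ((ρ⁻¹ • ((2 : ℝ) • (1 : Matrix (Fin N) (Fin N) ℝ) - matR N) - matC N)⁻¹ *ᵥ e1) :=
  gossip_bound_rate_ratio_reformulation_general N hN lr lc hlr hlc ρ hρ A hA w v e1 hw hv hinv2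
end

section
/- Let N ≥ 2 be an integer. Let C be the N×N real matrix with entries C_{k,k} = −k(N−k) and C_{k+1,k} = k(N−k) for 1 ≤ k ≤ N−1 and zeros elsewhere, and let R be the N×N real matrix with entries R_{k,k} = −(k−1) and R_{k−1,k} = k−1 for 2 ≤ k ≤ N and zeros elsewhere. Consider the real function q(λ̃) := det(λ̃·(2I − R) − C). Then q(0) = 0 and the derivative of q at 0 equals 2(N−1)·∏_{j=1}^{N−2} j(N−j), which is strictly positive. Moreover, for every k with 1 ≤ k ≤ N−1, the determinant of the k×k leading principal submatrix of −C equals ∏_{j=1}^{k} j(N−j) ≠ 0. -/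
/-!
The last column of `C` vanishes, so `λ̃` factors out of the last column of
`M(λ̃) = λ̃ (2I - R) - C`: `q(λ̃) = λ̃ g(λ̃)` with `g` continuous, hence `q(0) = 0` and
`q'(0) = g(0)`. In `g(0)` the last column is that of `2I - R`; adding the column `N - 1` of `-C`
turns it into `2 e_N`, which leaves a lower triangular matrix whose diagonal is that of `-C`
followed by `2`. All leading minors of the lower bidiagonal matrix `-C` are products of its
diagonal entries `j (N - j)`.
-/

open Matrix Finset

/-- Determinant of the `k × k` upper-left (leading principal) submatrix of an `N × N` matrix;
by convention it is `1` for `k = 0` (empty matrix). -/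
noncomputable def leadMinor {N : ℕ} (M : Matrix (Fin N) (Fin N) ℝ) (k : ℕ) : ℝ :=
  if h : k ≤ N then (M.submatrix (Fin.castLE h) (Fin.castLE h)).det else 0

theorem hasDerivAt_of_eq_sub_mul {𝕜 : Type*} [NontriviallyNormedField 𝕜] {f g : 𝕜 → 𝕜} {x : 𝕜}
    (hfg : ∀ t, f t = (t - x) * g t) (hg : ContinuousAt g x) : HasDerivAt f (g x) x := by
  rw [hasDerivAt_iff_tendsto_slope]
  refine (hg.tendsto.mono_left nhdsWithin_le_nhds).congr' ?_
  filter_upwards [self_mem_nhdsWithin] with t ht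
  rw [slope_def_field, hfg t, hfg x, sub_self, zero_mul, sub_zero,
    mul_div_cancel_left₀ _ (sub_ne_zero.2 ht)]

theorem Matrix.det_eq_mul_det_updateCol {n R : Type*} [Fintype n] [DecidableEq n] [CommRing R]
    {A : Matrix n n R} {j : n} {s : R} {v : n → R} (h : ∀ i, A i j = s * v i) :
    A.det = s * (A.updateCol j v).det := by
  rw [← det_updateCol_smul]
  congr
  ext i k
  by_cases hk : k = j
  · subst hk; simp [h]
  · simp [updateCol_ne hk]

theorem Matrix.IsLowerTriangular.updateCol {n R : Type*} [LinearOrder n] [Zero R] [DecidableEq n]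
    {A : Matrix n n R} (hA : A.IsLowerTriangular) {j : n} {v : n → R} (hv : ∀ i < j, v i = 0) :
    (A.updateCol j v).IsLowerTriangular := by
  intro i k hik
  by_cases hk : k = j
  · subst hk; simpa using hv i hik
  · rw [updateCol_ne hk]; exact hA hik

theorem isLowerTriangular_matC (N : ℕ) : (matC N).IsLowerTriangular := by
  intro i j hij
  have hij : (i : ℕ) < j := hij
  simp only [matC, of_apply]
  rw [if_neg (by omega), if_neg (by omega)]

theorem matC_apply_last (n : ℕ) (i : Fin (n + 1)) : matC (n + 1) i (Fin.last n) = 0 := by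
  simp only [matC, of_apply]
  split_ifs with hi hsub
  · rw [hi, Fin.val_last]; push_cast; ring
  · simp only [Fin.val_last] at hsub; omega
  · rfl

theorem prod_neg_matC_diag {N k : ℕ} (f : Fin k → Fin N) (hf : ∀ i, (f i : ℕ) = i) :
    ∏ i, (-(matC N)) (f i) (f i) = ∏ j ∈ Icc 1 k, (j : ℝ) * ((N : ℝ) - j) := by
  rw [← Finset.Ico_add_one_right_eq_Icc, prod_Ico_eq_prod_range, ← Fin.prod_univ_eq_prod_range]
  refine prod_congr rfl fun i _ => ?_
  simp [matC, hf]
  ring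

theorem det_neg_matC_submatrix_castLE {N k : ℕ} (hk : k ≤ N) :
    ((-(matC N)).submatrix (Fin.castLE hk) (Fin.castLE hk)).det
      = ∏ j ∈ Icc 1 k, (j : ℝ) * ((N : ℝ) - j) := by
  rw [det_of_isLowerTriangular _ fun i j hij => by
    simp [isLowerTriangular_matC N (i := Fin.castLE hk i) (j := Fin.castLE hk j) hij]]
  exact prod_neg_matC_diag _ fun _ => rfl

theorem prod_Icc_mul_sub_pos {N k : ℕ} (hk : k < N) :
    0 < ∏ j ∈ Icc 1 k, (j : ℝ) * ((N : ℝ) - j) := by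
  refine prod_pos fun j hj => ?_
  obtain ⟨hj1, hjk⟩ := mem_Icc.1 hj
  have : (j : ℝ) < N := by exact_mod_cast hjk.trans_lt hk
  have : (1 : ℝ) ≤ j := by exact_mod_cast hj1
  nlinarith

theorem two_smul_one_sub_matR_add_neg_matC_col_eq_single (n : ℕ) (i : Fin (n + 2)) :
    ((2 : ℝ) • (1 : Matrix (Fin (n + 2)) (Fin (n + 2)) ℝ) - matR (n + 2)) i (Fin.last (n + 1))
      + (-(matC (n + 2))) i (Fin.last n).castSucc
      = (Pi.single (Fin.last (n + 1)) 2 : Fin (n + 2) → ℝ) i := by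
  obtain ⟨i, hi⟩ := i
  simp only [Pi.single_apply, Matrix.sub_apply, Matrix.smul_apply, one_apply, Matrix.neg_apply,
    matR, matC, of_apply, Fin.ext_iff, Fin.val_last, Fin.val_castSucc, smul_eq_mul]
  split_ifs <;> (try subst_vars) <;> first | omega | (push_cast; ring)

theorem det_updateCol_neg_matC_last (n : ℕ) :
    ((-(matC (n + 2))).updateCol (Fin.last (n + 1))
        fun i => ((2 : ℝ) • (1 : Matrix (Fin (n + 2)) (Fin (n + 2)) ℝ) - matR (n + 2)) i
          (Fin.last (n + 1))).det
      = 2 * ((n : ℝ) + 1) * ∏ j ∈ Icc 1 n, (j : ℝ) * (((n + 2 : ℕ) : ℝ) - j) := by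
  set A := (-(matC (n + 2))).updateCol (Fin.last (n + 1))
    fun i => ((2 : ℝ) • (1 : Matrix (Fin (n + 2)) (Fin (n + 2)) ℝ) - matR (n + 2)) i
      (Fin.last (n + 1))
  have hne : Fin.last (n + 1) ≠ (Fin.last n).castSucc := (Fin.castSucc_lt_last _).ne'
  have hA : A.updateCol (Fin.last (n + 1))
        (fun i => A i (Fin.last (n + 1)) + A i (Fin.last n).castSucc)
      = (-(matC (n + 2))).updateCol (Fin.last (n + 1)) (Pi.single (Fin.last (n + 1)) 2) := by
    ext i j
    simp only [A, updateCol_apply, if_neg hne.symm]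
    split_ifs
    · exact two_smul_one_sub_matR_add_neg_matC_col_eq_single n i
    · rfl
  have htri : ((-(matC (n + 2))).updateCol (Fin.last (n + 1))
      (Pi.single (Fin.last (n + 1)) 2)).IsLowerTriangular :=
    IsLowerTriangular.updateCol (isLowerTriangular_matC _).neg fun _ hi =>
      Pi.single_eq_of_ne hi.ne _
  rw [← det_updateCol_add_self A hne, hA, det_of_isLowerTriangular _ htri, Fin.prod_univ_castSucc]
  simp only [updateCol_self, Pi.single_eq_same, updateCol_ne (Fin.castSucc_lt_last _).ne]
  rw [prod_neg_matC_diag Fin.castSucc fun _ => rfl, prod_Icc_succ_top (by omega)]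
  generalize ∏ j ∈ Icc 1 n, (j : ℝ) * (((n + 2 : ℕ) : ℝ) - j) = P
  push_cast
  ring

/-- The determinant `q(λ̃) = det(λ̃ (2I - R) - C)` of the tridiagonal matrix of the rate-ratio
reformulation vanishes at `λ̃ = 0` with strictly positive derivative
`2(N-1) ∏_{j=1}^{N-2} j(N-j)`, while all proper leading principal minors of `-C` are the
nonzero numbers `∏_{j=1}^{k} j(N-j)` (appendix, proof of Proposition 7). -/
theorem gossip_determinant_at_zero
    (N : ℕ) (hN : 2 ≤ N)
    (q : ℝ → ℝ)
    (hq : ∀ lam : ℝ,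
      q lam = (lam • ((2 : ℝ) • (1 : Matrix (Fin N) (Fin N) ℝ) - matR N) - matC N).det) :
    q 0 = 0
      ∧ deriv q 0 = 2 * ((N : ℝ) - 1) * ∏ j ∈ Finset.Icc 1 (N - 2), (j : ℝ) * ((N : ℝ) - (j : ℝ))
      ∧ 0 < 2 * ((N : ℝ) - 1) * ∏ j ∈ Finset.Icc 1 (N - 2), (j : ℝ) * ((N : ℝ) - (j : ℝ))
      ∧ ∀ k : ℕ, 1 ≤ k → k ≤ N - 1 →
          leadMinor (-(matC N)) k = ∏ j ∈ Finset.Icc 1 k, (j : ℝ) * ((N : ℝ) - (j : ℝ))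
            ∧ (∏ j ∈ Finset.Icc 1 k, (j : ℝ) * ((N : ℝ) - (j : ℝ))) ≠ 0 := by
  obtain ⟨n, rfl⟩ : ∃ n, N = n + 2 := ⟨N - 2, by omega⟩
  set B := (2 : ℝ) • (1 : Matrix (Fin (n + 2)) (Fin (n + 2)) ℝ) - matR (n + 2)
  set g : ℝ → ℝ := fun t => ((t • B - matC (n + 2)).updateCol (Fin.last (n + 1))
    fun i => B i (Fin.last (n + 1))).det
  have hqg : ∀ t, q t = (t - 0) * g t := fun t => by
    rw [hq, sub_zero]
    exact det_eq_mul_det_updateCol fun i => by simp [matC_apply_last]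
  have hg : Continuous g := by fun_prop
  have hg0 : g 0 = 2 * ((n : ℝ) + 1) * ∏ j ∈ Icc 1 n, (j : ℝ) * (((n + 2 : ℕ) : ℝ) - j) := by
    simp only [g, zero_smul, zero_sub]
    exact det_updateCol_neg_matC_last n
  have hderiv := hasDerivAt_of_eq_sub_mul hqg hg.continuousAt
  have hpos := prod_Icc_mul_sub_pos (N := n + 2) (k := n) (by omega)
  rw [Nat.add_sub_cancel]
  refine ⟨by simp [hqg], by rw [hderiv.deriv, hg0]; push_cast; ring,
    mul_pos (by push_cast; linarith) hpos, fun k _ hk => ?_⟩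
  rw [leadMinor, dif_pos (by omega), det_neg_matC_submatrix_castLE]
  exact ⟨rfl, (prod_Icc_mul_sub_pos (by omega)).ne'⟩
end

section
/- For every integer N ≥ 4, ∑_{k=2}^{N−2} 1/(k·(N−k)) ≥ (2/N)·log((N−2)/2) + 1/(2(N−2)). -/
/-!
By partial fractions `1/(k(N-k)) = (1/k + 1/(N-k))/N`, and the substitution `k ↦ N - k` maps
`[2, N-2]` onto itself, so the sum is `(2/N) ∑_{k=2}^{N-2} 1/k`. The harmonic sum is bounded below by
the trapezoid rule for the convex function `1/x`, i.e. `log((k+1)/k) ≤ (1/k + 1/(k+1))/2`, which gives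
`∑_{k=2}^{M} 1/k ≥ log(M/2) + 1/4 + 1/(2M)`; with `M = N - 2` the endpoint terms combine to
`(2/N)(1/4 + 1/(2M)) = 1/(2M)`.
-/

open Finset

lemma Real.log_le_half_sub_inv {x : ℝ} (hx : 1 ≤ x) : Real.log x ≤ (x - x⁻¹) / 2 := by
  rw [← Real.sinh_log (by positivity)]
  exact Real.self_le_sinh_iff.2 (Real.log_nonneg hx)

lemma Real.log_add_one_sub_log_le {x : ℝ} (hx : 0 < x) :
    Real.log (x + 1) - Real.log x ≤ (1 / x + 1 / (x + 1)) / 2 := by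
  have hratio : 1 ≤ (x + 1) / x := by rw [le_div_iff₀ hx]; linarith
  calc Real.log (x + 1) - Real.log x
      = Real.log ((x + 1) / x) := (Real.log_div (by positivity) hx.ne').symm
    _ ≤ ((x + 1) / x - ((x + 1) / x)⁻¹) / 2 := Real.log_le_half_sub_inv hratio
    _ = (1 / x + 1 / (x + 1)) / 2 := by field_simp; ring

lemma log_div_add_le_sum_Icc_inv {a : ℕ} (ha : 0 < a) {M : ℕ} (haM : a ≤ M) :
    Real.log (M / a) + 1 / (2 * a) + 1 / (2 * M) ≤ ∑ k ∈ Icc a M, (1 : ℝ) / k := by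
  induction M, haM using Nat.le_induction with
  | base =>
    have : (0 : ℝ) < a := by exact_mod_cast ha
    rw [div_self this.ne', Real.log_one, Icc_self, sum_singleton]
    exact le_of_eq (by ring)
  | succ M haM ih =>
    have hM : (0 : ℝ) < M := by exact_mod_cast ha.trans_le haM
    have hstep := Real.log_add_one_sub_log_le hM
    rw [sum_Icc_succ_top (by omega), Nat.cast_succ,
      Real.log_div (by positivity) (by positivity)]
    rw [Real.log_div hM.ne' (by positivity)] at ih
    have hsplit : (1 / M + 1 / (M + 1)) / 2 = 1 / (M + 1) + 1 / (2 * M) - 1 / (2 * (M + 1) : ℝ) := by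
      field_simp; ring
    linarith

lemma sum_Icc_one_div_mul_sub_eq {a : ℕ} (ha : 0 < a) (N : ℕ) :
    ∑ k ∈ Icc a (N - a), (1 : ℝ) / (k * (N - k)) = 2 / N * ∑ k ∈ Icc a (N - a), (1 : ℝ) / k := by
  have hpartial : ∀ k ∈ Icc a (N - a),
      (1 : ℝ) / (k * (N - k)) = 1 / N * (1 / k + 1 / (N - k)) := by
    intro k hk
    rw [mem_Icc] at hk
    have hk0 : (0 : ℝ) < k := by exact_mod_cast ha.trans_le hk.1
    have hkN : (k : ℝ) < N := by exact_mod_cast (by omega : k < N)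
    field_simp [(sub_pos.2 hkN).ne', (hk0.trans hkN).ne']
    ring
  have hreflect : ∑ k ∈ Icc a (N - a), (1 : ℝ) / (N - k) = ∑ k ∈ Icc a (N - a), (1 : ℝ) / k := by
    refine sum_nbij' (N - ·) (N - ·) ?_ ?_ ?_ ?_ ?_ <;> intro k hk <;>
      simp only [mem_Icc] at hk ⊢
    · omega
    · omega
    · omega
    · omega
    · rw [Nat.cast_sub (by omega)]
  rw [sum_congr rfl hpartial, ← mul_sum, sum_add_distrib, hreflect]
  ring

/-- Trapezoid-rule lower bound (appendix, proof of the approximation in Corollary 3):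
`∑_{k=2}^{N-2} 1/(k(N-k)) ≥ (2/N) log((N-2)/2) + 1/(2(N-2))`. -/
theorem sum_inv_ge_log_bound (N : ℕ) (hN : 4 ≤ N) :
    ∑ k ∈ Finset.Icc 2 (N - 2), (1 : ℝ) / ((k : ℝ) * ((N : ℝ) - (k : ℝ)))
      ≥ (2 / (N : ℝ)) * Real.log (((N : ℝ) - 2) / 2) + 1 / (2 * ((N : ℝ) - 2)) := by
  have hharmonic := log_div_add_le_sum_Icc_inv two_pos (by omega : 2 ≤ N - 2)
  have hN4 : (4 : ℝ) ≤ N := by exact_mod_cast hN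
  rw [Nat.cast_sub (by omega), Nat.cast_two] at hharmonic
  rw [sum_Icc_one_div_mul_sub_eq two_pos, ge_iff_le]
  calc 2 / (N : ℝ) * Real.log ((N - 2) / 2) + 1 / (2 * (N - 2))
      = 2 / N * (Real.log ((N - 2) / 2) + 1 / (2 * 2) + 1 / (2 * (N - 2))) := by
        field_simp [show (N : ℝ) - 2 ≠ 0 by linarith]
        ring
    _ ≤ 2 / N * ∑ k ∈ Icc 2 (N - 2), (1 : ℝ) / k := by gcongr
end
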